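/- arXiv:1702.05805 — 2 statements merged into one kernel-verified Lean document; each statement's English description precedes it below -/
import Mathlib

section
/- The maximum local edge connectivity of the Global Max-Flow reduction graph for a CNF formula F (maximized over pairs (α, β) with α an assignment to U_1 and β an assignment to U_2) equals the maximum number of clauses of F satisfiable by any total assignment. -/
attribute [local instance] Classical.propDecidable

/-- A feasible `s`-`t` flow in a directed capacitated graph given by `cap`:
capacity constraints on every edge and conservation at every vertex other than `s`, `t`. -/
def IsFlow {V : Type*} [Fintype V] (cap : V → V → ℕ) (s t : V) (f : V → V → ℕ) : Prop :=
  (∀ u v, f u v ≤ cap u v) ∧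
  ∀ v, v ≠ s → v ≠ t → ∑ u, f u v = ∑ u, f v u

/-- The maximum `s`-`t` flow value: the supremum of net flow out of `s` over feasible flows. -/
noncomputable def maxFlow {V : Type*} [Fintype V] (cap : V → V → ℕ) (s t : V) : ℕ :=
  sSup {x : ℕ | ∃ f, IsFlow cap s t f ∧ ∑ v, f s v = x + ∑ v, f v s}

/-- A directed path from `s` to `t` using only edges of positive capacity. -/
def IsPath {V : Type*} (cap : V → V → ℕ) (s t : V) (p : List V) : Prop :=
  p.Chain' (fun u v => cap u v ≠ 0) ∧ p.head? = some s ∧ p.getLast? = some t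

/-- The (directed) edges traversed by a path. -/
def pathEdges {V : Type*} (p : List V) : List (V × V) := p.zip p.tail

/-- The maximum number of pairwise edge-disjoint directed `s`-`t` paths. -/
noncomputable def maxEDP {V : Type*} (cap : V → V → ℕ) (s t : V) : ℕ :=
  sSup {k : ℕ | ∃ ps : List (List V), ps.length = k ∧
    (∀ p ∈ ps, IsPath cap s t p ∧ (pathEdges p).Nodup) ∧
    ps.Pairwise (fun p q => ∀ e ∈ pathEdges p, e ∉ pathEdges q)}

/-- A CNF clause over variables `U1 ⊕ U2`: a finite set of literals (variable, polarity). -/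
abbrev Clause2 (U1 U2 : Type*) := Finset ((U1 ⊕ U2) × Bool)

/-- The assignment `α` to the variables `U1` satisfies the clause `C`. -/
def satA {U1 U2 : Type*} (α : U1 → Bool) (C : Clause2 U1 U2) : Prop :=
  ∃ l ∈ C, ∃ x : U1, l.1 = Sum.inl x ∧ α x = l.2

/-- The assignment `β` to the variables `U2` satisfies the clause `C`. -/
def satB {U1 U2 : Type*} (β : U2 → Bool) (C : Clause2 U1 U2) : Prop :=
  ∃ l ∈ C, ∃ x : U2, l.1 = Sum.inr x ∧ β x = l.2

/-- Vertices of the Global Max-Flow reduction graph: assignments to `U1`, assignments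
to `U2`, and for each clause `i` three clause vertices: `(i, 0)` is `c_i^{⊨⊨}`,
`(i, 1)` is `c_i^{⊨⊭}`, `(i, 2)` is `c_i^{⊭⊨}`. -/
abbrev RV (U1 U2 : Type*) (m : ℕ) := (U1 → Bool) ⊕ (U2 → Bool) ⊕ (Fin m × Fin 3)

/-- Unit-capacity edges of the Global Max-Flow reduction graph: if `α ⊨ C_i`, edges
`(α, c_i^{⊨⊨})` and `(α, c_i^{⊨⊭})`, else edge `(α, c_i^{⊭⊨})`; if `β ⊨ C_i`, edges
`(c_i^{⊨⊨}, β)` and `(c_i^{⊭⊨}, β)`, else edge `(c_i^{⊨⊭}, β)`. -/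
noncomputable def redCap {U1 U2 : Type*} {m : ℕ} (F : Fin m → Clause2 U1 U2) :
    RV U1 U2 m → RV U1 U2 m → ℕ
  | Sum.inl α, Sum.inr (Sum.inr (i, j)) =>
      if (j = 0 ∨ j = 1) ∧ satA α (F i) then 1
      else if j = 2 ∧ ¬ satA α (F i) then 1 else 0
  | Sum.inr (Sum.inr (i, j)), Sum.inr (Sum.inl β) =>
      if (j = 0 ∨ j = 2) ∧ satB β (F i) then 1
      else if j = 1 ∧ ¬ satB β (F i) then 1 else 0
  | _, _ => 0

/-! Every walk starting at an assignment `α` of `U1` has at most two edges, so the `α`-`β`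
paths are exactly the paths `α → c → β` through a clause vertex `c` joined to both ends.
Such a vertex exists for `C_i` iff `α` or `β` satisfies `C_i`, and it is then unique. Two-edge
paths through distinct middle vertices are edge-disjoint, while two through the same one share
an edge, so the local edge connectivity from `α` to `β` is already the number of clauses
satisfied by `(α, β)`, before maximizing. -/

section TwoEdgePaths

variable {V : Type*} {cap : V → V → ℕ} {s t : V}

lemma isPath_iff_of_walks_short (hst : s ≠ t) (h_st : cap s t = 0)
    (h_short : ∀ v w x, cap s v ≠ 0 → cap v w ≠ 0 → cap w x = 0) (p : List V) :
    IsPath cap s t p ↔ ∃ v, (cap s v ≠ 0 ∧ cap v t ≠ 0) ∧ p = [s, v, t] := by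
  constructor
  · rintro ⟨hchain, hhead, hlast⟩
    replace hchain : p.IsChain (fun u v => cap u v ≠ 0) := hchain
    rcases p with _ | ⟨a, _ | ⟨b, _ | ⟨c, _ | ⟨d, rest⟩⟩⟩⟩
    · simp at hhead
    · simp only [List.head?_cons, List.getLast?_singleton, Option.some.injEq] at hhead hlast
      exact absurd (hhead.symm.trans hlast) hst
    · simp only [List.head?_cons, List.getLast?_cons_cons, List.getLast?_singleton,
        Option.some.injEq] at hhead hlast
      subst hhead hlast
      exact absurd h_st (List.isChain_cons_cons.mp hchain).1
    · simp only [List.head?_cons, List.getLast?_cons_cons, List.getLast?_singleton,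
        Option.some.injEq] at hhead hlast
      subst hhead hlast
      simp only [List.isChain_cons_cons, List.isChain_singleton, and_true] at hchain
      exact ⟨b, hchain, rfl⟩
    · simp only [List.head?_cons, Option.some.injEq] at hhead
      subst hhead
      simp only [List.isChain_cons_cons] at hchain
      exact absurd (h_short b c d hchain.1 hchain.2.1) hchain.2.2.1
  · rintro ⟨v, ⟨hsv, hvt⟩, rfl⟩
    exact ⟨List.isChain_cons_cons.2 ⟨hsv, List.isChain_pair.2 hvt⟩, rfl, rfl⟩

lemma maxEDP_eq_card_of_isPath_iff (M : Finset V) (hsM : s ∉ M)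
    (hpath : ∀ p, IsPath cap s t p ↔ ∃ v ∈ M, p = [s, v, t]) :
    maxEDP cap s t = M.card := by
  have hshape : ∀ p, IsPath cap s t p → ∃ v ∈ M, p = [s, v, t] := fun p => (hpath p).1
  refine IsGreatest.csSup_eq ⟨⟨M.toList.map fun v => [s, v, t], by simp, ?_, ?_⟩, ?_⟩
  · simp only [List.mem_map, Finset.mem_toList]
    rintro _ ⟨v, hv, rfl⟩
    refine ⟨(hpath _).2 ⟨v, hv, rfl⟩, ?_⟩
    simp only [pathEdges, List.tail_cons, List.zip_cons_cons, List.zip_nil_right,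
      List.nodup_cons, List.mem_singleton, Prod.mk.injEq, List.not_mem_nil, not_false_eq_true,
      List.nodup_nil, and_self, and_true]
    rintro ⟨rfl, -⟩
    exact hsM hv
  · refine List.pairwise_map.2 (M.nodup_toList.imp_of_mem fun hv hw hvw => ?_)
    rw [Finset.mem_toList] at hv hw
    simp only [pathEdges, List.tail_cons, List.zip_cons_cons, List.zip_nil_right,
      List.mem_cons, List.not_mem_nil, or_false]
    rintro e (rfl | rfl) (he | he) <;> simp only [Prod.mk.injEq] at he
    exacts [hvw he.2, hsM (he.1 ▸ hw), hsM (he.1 ▸ hv), hvw he.1]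
  · rintro k ⟨ps, rfl, hps, hdisjoint⟩
    have hnodup : ps.Nodup := hdisjoint.imp_of_mem fun hp _ hpq hpq' => by
      subst hpq'
      obtain ⟨v, -, rfl⟩ := hshape _ (hps _ hp).1
      exact hpq (s, v) (by simp [pathEdges]) (by simp [pathEdges])
    calc ps.length = ps.toFinset.card := (List.toFinset_card_of_nodup hnodup).symm
      _ ≤ (M.image fun v => [s, v, t]).card := Finset.card_le_card fun p hp => by
          obtain ⟨v, hv, rfl⟩ := hshape p (hps p (List.mem_toFinset.1 hp)).1
          exact Finset.mem_image_of_mem _ hv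
      _ ≤ M.card := Finset.card_image_le

end TwoEdgePaths

section ReductionGraph

variable {U1 U2 : Type*} {m : ℕ} (F : Fin m → Clause2 U1 U2) (α : U1 → Bool) (β : U2 → Bool)

noncomputable def clauseLink (i : Fin m) : Fin 3 :=
  if satA α (F i) then (if satB β (F i) then 0 else 1) else 2

lemma redCap_ne_zero_and_ne_zero_iff (i : Fin m) (j : Fin 3) :
    (redCap F (Sum.inl α) (Sum.inr (Sum.inr (i, j))) ≠ 0 ∧
      redCap F (Sum.inr (Sum.inr (i, j))) (Sum.inr (Sum.inl β)) ≠ 0) ↔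
      (satA α (F i) ∨ satB β (F i)) ∧ j = clauseLink F α β i := by
  unfold clauseLink
  simp only [redCap]
  by_cases hA : satA α (F i) <;> by_cases hB : satB β (F i) <;> fin_cases j <;> simp [hA, hB]

noncomputable def linkVertices : Finset (RV U1 U2 m) :=
  (Finset.univ.filter fun i => satA α (F i) ∨ satB β (F i)).image
    fun i => Sum.inr (Sum.inr (i, clauseLink F α β i))

lemma mem_linkVertices_iff (v : RV U1 U2 m) :
    v ∈ linkVertices F α β ↔
      redCap F (Sum.inl α) v ≠ 0 ∧ redCap F v (Sum.inr (Sum.inl β)) ≠ 0 := by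
  rcases v with _ | _ | ⟨i, j⟩
  iterate 2 simp [linkVertices, redCap]
  · rw [redCap_ne_zero_and_ne_zero_iff]
    simp [linkVertices, eq_comm]

lemma card_linkVertices :
    (linkVertices F α β).card =
      (Finset.univ.filter fun i => satA α (F i) ∨ satB β (F i)).card :=
  Finset.card_image_of_injective _ fun _ _ h =>
    (Prod.mk.inj (Sum.inr_injective (Sum.inr_injective h))).1

lemma redCap_walk_from_inl (v w x : RV U1 U2 m) (hv : redCap F (Sum.inl α) v ≠ 0)
    (hw : redCap F v w ≠ 0) : redCap F w x = 0 := by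
  rcases v with _ | _ | _ <;> rcases w with _ | _ | _ <;> rcases x with _ | _ | _ <;>
    first | rfl | exact absurd rfl hv | exact absurd rfl hw

theorem maxEDP_redCap :
    maxEDP (redCap F) (Sum.inl α) (Sum.inr (Sum.inl β)) =
      (Finset.univ.filter fun i => satA α (F i) ∨ satB β (F i)).card := by
  rw [← card_linkVertices]
  refine maxEDP_eq_card_of_isPath_iff _ (fun h => ((mem_linkVertices_iff F α β _).1 h).1 rfl)
    fun p => ?_
  rw [isPath_iff_of_walks_short Sum.inl_ne_inr rfl (redCap_walk_from_inl F α) p]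
  simp only [mem_linkVertices_iff]

end ReductionGraph

theorem stmt4_general {U1 U2 : Type*} {m : ℕ} (F : Fin m → Clause2 U1 U2) :
    (⨆ α : U1 → Bool, ⨆ β : U2 → Bool,
        maxEDP (redCap F) (Sum.inl α) (Sum.inr (Sum.inl β))) =
      ⨆ α : U1 → Bool, ⨆ β : U2 → Bool,
        (Finset.univ.filter fun i => satA α (F i) ∨ satB β (F i)).card :=
  iSup_congr fun α => iSup_congr fun β => maxEDP_redCap F α β

/-- the maximum local edge connectivity of the reduction graph, maximized
over pairs `(α, β)` of assignments to `U1` and `U2`, equals the maximum number of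
clauses of `F` satisfiable by any total assignment (i.e. by any pair `(α, β)`). -/
theorem stmt4 {U1 U2 : Type*} [Fintype U1] [DecidableEq U1] [Fintype U2] [DecidableEq U2]
    {m : ℕ} (F : Fin m → Clause2 U1 U2) :
    (⨆ α : U1 → Bool, ⨆ β : U2 → Bool,
        maxEDP (redCap F) (Sum.inl α) (Sum.inr (Sum.inl β))) =
      ⨆ α : U1 → Bool, ⨆ β : U2 → Bool,
        (Finset.univ.filter fun i => satA α (F i) ∨ satB β (F i)).card :=
  stmt4_general F
end

section
/- In the uncapacitated reduction gadget G_p^{α,β,γ} (defined as above), if the combined assignment (α, β, γ) satisfies at most p − 1 clauses, then the maximum α-γ flow in G_p^{α,β,γ} is at least m. -/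
/-!
Send one unit from `α` for every clause `C_i`. If neither `α` nor `β` satisfies `C_i`, the unit
goes to `β_i^l`, and from there straight to `γ` when `γ` fails `C_i` too, and to `β_i^r`
otherwise; if `α` or `β` satisfies `C_i`, it goes directly to `β_i^r`. The units reaching some
`β_i^r` are indexed by the clauses satisfied by `(α, β, γ)`; there are at most `p - 1` of them,
so an injection into `[p - 1]` routes them through pairwise distinct `β'_j` to `γ`.
-/

attribute [local instance] Classical.propDecidable

/-- A CNF clause over variables `U1 ⊕ U2 ⊕ U3`. -/
abbrev Clause3 (U1 U2 U3 : Type*) := Finset ((U1 ⊕ U2 ⊕ U3) × Bool)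

/-- The assignment `a` to `U1` satisfies the clause `C`. -/
def sat3A {U1 U2 U3 : Type*} (a : U1 → Bool) (C : Clause3 U1 U2 U3) : Prop :=
  ∃ l ∈ C, ∃ x : U1, l.1 = Sum.inl x ∧ a x = l.2

/-- The assignment `b` to `U2` satisfies the clause `C`. -/
def sat3B {U1 U2 U3 : Type*} (b : U2 → Bool) (C : Clause3 U1 U2 U3) : Prop :=
  ∃ l ∈ C, ∃ x : U2, l.1 = Sum.inr (Sum.inl x) ∧ b x = l.2

/-- The assignment `g` to `U3` satisfies the clause `C`. -/
def sat3G {U1 U2 U3 : Type*} (g : U3 → Bool) (C : Clause3 U1 U2 U3) : Prop :=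
  ∃ l ∈ C, ∃ x : U3, l.1 = Sum.inr (Sum.inr x) ∧ g x = l.2

/-- Vertices of the uncapacitated reduction gadget `G_p^{α,β,γ}`. -/
inductive UGadV (m p : ℕ) where
  | src                    -- α
  | snk                    -- γ
  | bp                     -- β'
  | bl (i : Fin m)         -- β_i^l
  | br (i : Fin m)         -- β_i^r
  | bpj (j : Fin (p - 1))  -- β'_j
  deriving DecidableEq, Fintype

/-- Unit-capacity edges of `G_p^{α,β,γ}`, with `sA i`, `sB i`, `sG i` meaning
`α ⊨ C_i`, `β ⊨ C_i`, `γ ⊨ C_i`. -/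
noncomputable def ucap {m p : ℕ} (sA sB sG : Fin m → Prop) : UGadV m p → UGadV m p → ℕ
  | .src, .bl i => if ¬ sA i ∧ ¬ sB i then 1 else 0
  | .src, .br i => if sA i ∨ sB i then 1 else 0
  | .bl i, .snk => if ¬ sA i ∧ ¬ sB i ∧ ¬ sG i then 1 else 0
  | .bl i, .br j => if i = j then 1 else 0
  | .br _, .bp => 1
  | .bp, .bpj _ => 1
  | .bpj _, .snk => 1
  | _, _ => 0

open Finset

theorem IsFlow.le_maxFlow {V : Type*} [Fintype V] {cap : V → V → ℕ} {s t : V}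
    {f : V → V → ℕ} (hf : IsFlow cap s t f) {x : ℕ} (hx : ∑ v, f s v = x + ∑ v, f v s) :
    x ≤ maxFlow cap s t := by
  refine le_csSup ⟨∑ v, cap s v, ?_⟩ ⟨f, hf, hx⟩
  rintro y ⟨f', hf', hy⟩
  calc y ≤ y + ∑ v, f' v s := Nat.le_add_right _ _
    _ = ∑ v, f' s v := hy.symm
    _ ≤ ∑ v, cap s v := sum_le_sum fun v _ => hf'.1 _ _

namespace UGadV

def equivSum (m p : ℕ) :
    (Unit ⊕ Unit ⊕ Unit ⊕ Fin m ⊕ Fin m ⊕ Fin (p - 1)) ≃ UGadV m p where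
  toFun
    | .inl _ => .src
    | .inr (.inl _) => .snk
    | .inr (.inr (.inl _)) => .bp
    | .inr (.inr (.inr (.inl i))) => .bl i
    | .inr (.inr (.inr (.inr (.inl i)))) => .br i
    | .inr (.inr (.inr (.inr (.inr j)))) => .bpj j
  invFun
    | .src => .inl ()
    | .snk => .inr (.inl ())
    | .bp => .inr (.inr (.inl ()))
    | .bl i => .inr (.inr (.inr (.inl i)))
    | .br i => .inr (.inr (.inr (.inr (.inl i))))
    | .bpj j => .inr (.inr (.inr (.inr (.inr j))))
  left_inv x := by rcases x with _ | _ | _ | _ | _ | _ <;> rfl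
  right_inv v := by cases v <;> rfl

theorem sum_univ {m p : ℕ} {M : Type*} [AddCommMonoid M] (G : UGadV m p → M) :
    ∑ v, G v = G .src + (G .snk + (G .bp + ((∑ i, G (.bl i)) + ((∑ i, G (.br i))
      + ∑ j, G (.bpj j))))) := by
  rw [← (equivSum m p).sum_comp]
  simp [Fintype.sum_sum_type, equivSum]

end UGadV

section GadgetFlow

variable {m p : ℕ} (sA sB sG : Fin m → Prop)
  (e : {i : Fin m // sA i ∨ sB i ∨ sG i} → Fin (p - 1))

noncomputable def gadgetFlow : UGadV m p → UGadV m p → ℕ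
  | .src, .bl i => if ¬ sA i ∧ ¬ sB i then 1 else 0
  | .src, .br i => if sA i ∨ sB i then 1 else 0
  | .bl i, .snk => if ¬ sA i ∧ ¬ sB i ∧ ¬ sG i then 1 else 0
  | .bl i, .br j => if i = j ∧ ¬ sA i ∧ ¬ sB i ∧ sG i then 1 else 0
  | .br i, .bp => if sA i ∨ sB i ∨ sG i then 1 else 0
  | .bp, .bpj j => if j ∈ Set.range e then 1 else 0
  | .bpj j, .snk => if j ∈ Set.range e then 1 else 0
  | _, _ => 0

theorem gadgetFlow_le_ucap (u v : UGadV m p) :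
    gadgetFlow sA sB sG e u v ≤ ucap sA sB sG u v := by
  cases u <;> cases v <;> simp [gadgetFlow, ucap] <;> split_ifs <;> simp_all

theorem gadgetFlow_conservation {e} (he : Function.Injective e) (v : UGadV m p)
    (hs : v ≠ .src) (ht : v ≠ .snk) :
    ∑ u, gadgetFlow sA sB sG e u v = ∑ u, gadgetFlow sA sB sG e v u := by
  rw [UGadV.sum_univ, UGadV.sum_univ]
  cases v with
  | src => exact (hs rfl).elim
  | snk => exact (ht rfl).elim
  | bp =>
    simp only [gadgetFlow, sum_const_zero, add_zero, zero_add, sum_boole, Nat.cast_id]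
    rw [← Fintype.card_subtype, ← Fintype.card_subtype, Set.card_range_of_injective he]
  | bl i =>
    simp only [gadgetFlow, sum_const_zero, add_zero, zero_add]
    by_cases hA : sA i <;> by_cases hB : sB i <;> by_cases hG : sG i <;> simp [hA, hB, hG]
  | br i =>
    simp only [gadgetFlow, sum_const_zero, add_zero, zero_add, ite_and, sum_ite_eq']
    by_cases hA : sA i <;> by_cases hB : sB i <;> by_cases hG : sG i <;> simp [hA, hB, hG]
  | bpj j => simp [gadgetFlow]

theorem isFlow_gadgetFlow {e} (he : Function.Injective e) :
    IsFlow (ucap sA sB sG) .src .snk (gadgetFlow (p := p) sA sB sG e) :=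
  ⟨gadgetFlow_le_ucap sA sB sG e, gadgetFlow_conservation sA sB sG he⟩

theorem sum_gadgetFlow_src_left : ∑ v, gadgetFlow sA sB sG e .src v = m := by
  rw [UGadV.sum_univ]
  simp only [gadgetFlow, sum_const_zero, zero_add, add_zero, ← sum_add_distrib]
  have h (i : Fin m) :
      (if ¬ sA i ∧ ¬ sB i then 1 else 0) + (if sA i ∨ sB i then 1 else 0) = 1 := by
    by_cases hA : sA i <;> by_cases hB : sB i <;> simp [hA, hB]
  simp [h]

theorem sum_gadgetFlow_src_right : ∑ v, gadgetFlow sA sB sG e v .src = 0 := by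
  simp [gadgetFlow]

end GadgetFlow

theorem stmt8_general {U1 U2 U3 : Type*} {m : ℕ} (F : Fin m → Clause3 U1 U2 U3)
    (a : U1 → Bool) (b : U2 → Bool) (g : U3 → Bool) (p : ℕ)
    (hsat : (Finset.univ.filter fun i =>
        sat3A a (F i) ∨ sat3B b (F i) ∨ sat3G g (F i)).card ≤ p - 1) :
    m ≤ maxFlow
        (ucap (m := m) (p := p) (fun i => sat3A a (F i)) (fun i => sat3B b (F i))
          (fun i => sat3G g (F i)))
        UGadV.src UGadV.snk := by
  set sA : Fin m → Prop := fun i => sat3A a (F i)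
  set sB : Fin m → Prop := fun i => sat3B b (F i)
  set sG : Fin m → Prop := fun i => sat3G g (F i)
  have hcard : Fintype.card {i // sA i ∨ sB i ∨ sG i} ≤ Fintype.card (Fin (p - 1)) := by
    rwa [Fintype.card_subtype, Fintype.card_fin]
  obtain ⟨e⟩ := Function.Embedding.nonempty_of_card_le hcard
  refine (isFlow_gadgetFlow sA sB sG e.injective).le_maxFlow ?_
  rw [sum_gadgetFlow_src_left, sum_gadgetFlow_src_right, add_zero]

/-- if the combined assignment `(α, β, γ)` satisfies at most `p - 1` of the
`m` clauses, then the maximum `α`-`γ` flow in `G_p^{α,β,γ}` is at least `m`. -/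
theorem stmt8 {U1 U2 U3 : Type*} {m : ℕ} (F : Fin m → Clause3 U1 U2 U3)
    (a : U1 → Bool) (b : U2 → Bool) (g : U3 → Bool) (p : ℕ)
    (hp1 : 1 ≤ p) (hpm : p ≤ m)
    (hsat : (Finset.univ.filter fun i =>
        sat3A a (F i) ∨ sat3B b (F i) ∨ sat3G g (F i)).card ≤ p - 1) :
    m ≤ maxFlow
        (ucap (m := m) (p := p) (fun i => sat3A a (F i)) (fun i => sat3B b (F i))
          (fun i => sat3G g (F i)))
        UGadV.src UGadV.snk :=
  stmt8_general F a b g p hsat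
end
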